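/- arXiv:1612.01363 — 4 statements merged into one kernel-verified Lean document; each statement's English description precedes it below -/
import Mathlib

section
/- Let q be a prime power, b a positive integer, and V a finite set of points in F_q^b with binomial(|V|,2) < q. Then there exists an invertible linear transformation T : F_q^b → F_q^b such that the images under T of the points in V all have pairwise distinct first coordinates. -/
/-!
For each pair of distinct points of `V`, the functionals that do not separate them form a proper
subspace of the dual space. Fewer than `q` proper subspaces cannot cover a vector space over a
field with `q` elements, so some functional `f` separates all points of `V`. If `f ≠ 0`, it is the
first coordinate function of a suitable basis, and `T` is the coordinate map of that basis.
-/

open Module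

section

variable (K : Type*) {M : Type*} [Field K] [AddCommGroup M] [Module K M]

def dualConstOn (t : Set M) : Submodule K (Dual K M) :=
  ⨅ x ∈ t, ⨅ y ∈ t, LinearMap.ker (Dual.eval K M (x - y))

variable {K}

lemma mem_dualConstOn {t : Set M} {f : Dual K M} :
    f ∈ dualConstOn K t ↔ ∀ x ∈ t, ∀ y ∈ t, f x = f y := by
  simp [dualConstOn, sub_eq_zero]

lemma dualConstOn_ne_top {t : Set M} (ht : t.Nontrivial) : dualConstOn K t ≠ ⊤ := by
  obtain ⟨x, hx, y, hy, hxy⟩ := ht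
  obtain ⟨f, hf⟩ : ∃ f : Dual K M, f (x - y) ≠ 0 := by
    by_contra! h
    exact hxy (sub_eq_zero.mp ((forall_dual_apply_eq_zero_iff K _).mp h))
  intro htop
  have hmem : f ∈ dualConstOn K t := htop ▸ Submodule.mem_top
  exact hf (by rw [map_sub, mem_dualConstOn.mp hmem x hx y hy, sub_self])

theorem Module.Dual.exists_injOn_of_choose_two_lt_card (S : Finset M)
    (hS : S.card.choose 2 < ENat.card K) : ∃ f : Dual K M, Set.InjOn f S := by
  classical
  let pairs := S.powersetCard 2
  have hcover := Submodule.iUnion_ssubset_of_forall_ne_top_of_card_lt (Finset.univ : Finset pairs)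
    (fun t => dualConstOn K (t.1 : Set M)) (fun t => dualConstOn_ne_top ?_) ?_
  · obtain ⟨f, -, hf⟩ := Set.exists_of_ssubset hcover
    refine ⟨f, fun x hx y hy hxy => by_contra fun hne => hf ?_⟩
    have hpair : {x, y} ∈ pairs := Finset.mem_powersetCard.mpr
      ⟨Finset.insert_subset hx (Finset.singleton_subset_iff.mpr hy), Finset.card_pair hne⟩
    refine Set.mem_biUnion (x := ⟨_, hpair⟩) (Finset.mem_univ _) (mem_dualConstOn.mpr ?_)
    rintro _ hx' _ hy'
    simp only [Finset.coe_insert, Finset.coe_singleton, Set.mem_insert_iff,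
      Set.mem_singleton_iff] at hx' hy'
    rcases hx' with rfl | rfl <;> rcases hy' with rfl | rfl <;> simp [hxy]
  · obtain ⟨x, y, hne, ht⟩ := Finset.card_eq_two.mp (Finset.mem_powersetCard.mp t.2).2
    exact ⟨x, by simp [ht], y, by simp [ht], hne⟩
  · simpa [pairs] using hS

theorem Module.Dual.exists_linearEquiv_apply_eq [FiniteDimensional K M] {n : ℕ}
    (hn : finrank K M = n) {f : Dual K M} (hf : f ≠ 0) (i : Fin n) :
    ∃ T : M ≃ₗ[K] (Fin n → K), ∀ x, T x i = f x := by
  obtain ⟨v, hv⟩ : ∃ v, f v = 1 := by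
    obtain ⟨w, hw⟩ := DFunLike.ne_iff.mp hf
    exact ⟨(f w)⁻¹ • w, by simpa using inv_mul_cancel₀ hw⟩
  obtain ⟨ι, B, j, -, hfB⟩ := exists_basis_of_pairing_ne_zero (f := f) (v := v) (by simp [hv])
  have := Module.Finite.finite_basis B
  let e₀ : ι ≃ Fin n := Finite.equivFinOfCardEq ((finrank_eq_nat_card_basis B).symm.trans hn)
  let e : ι ≃ Fin n := e₀.trans (Equiv.swap (e₀ j) i)
  refine ⟨(B.reindex e).equivFun, fun x => ?_⟩
  have hej : e.symm i = j := by simp [e]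
  rw [Basis.equivFun_apply, Basis.repr_reindex_apply, hej, hfB, hv, one_smul, Basis.coord_apply]

end

theorem simple_after_linear_transformation_general
    (q b : ℕ) (hb : 0 < b) (F : Type) [Field F] [Fintype F]
    (hq : Fintype.card F = q)
    (V : Finset (Fin b → F)) (hV : (V.card.choose 2) < q) :
    ∃ T : (Fin b → F) ≃ₗ[F] (Fin b → F),
      Set.InjOn (fun v : Fin b → F => T v ⟨0, hb⟩) (V : Set (Fin b → F)) := by
  obtain ⟨f, hf⟩ := Module.Dual.exists_injOn_of_choose_two_lt_card (K := F) V
    (by rw [ENat.card_eq_coe_fintype_card, hq]; exact_mod_cast hV)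
  by_cases hf₀ : f = 0
  · have hV₁ : (V : Set (Fin b → F)).Subsingleton := fun x hx y hy => hf hx hy (by simp [hf₀])
    exact ⟨LinearEquiv.refl F _, hV₁.injOn _⟩
  obtain ⟨T, hT⟩ := Module.Dual.exists_linearEquiv_apply_eq (finrank_fin_fun F) hf₀ ⟨0, hb⟩
  exact ⟨T, by simpa only [hT] using hf⟩

/-- Lemma 2.1: if `V ⊆ F_q^b` has `C(|V|,2) < q`, there is an invertible linear
transformation making the first coordinates of all points of `V` distinct. -/
theorem simple_after_linear_transformation
    (q b : ℕ) (hb : 0 < b) (F : Type) [Field F] [Fintype F]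
    (hq : Fintype.card F = q) (hpp : IsPrimePow q)
    (V : Finset (Fin b → F)) (hV : (V.card.choose 2) < q) :
    ∃ T : (Fin b → F) ≃ₗ[F] (Fin b → F),
      Set.InjOn (fun v : Fin b → F => T v ⟨0, hb⟩) (V : Set (Fin b → F)) :=
  simple_after_linear_transformation_general q b hb F hq V hV
end

section
/- Let s, t, a, b be positive integers with a < s and b ≤ s. Then there exists a constant C = C(a,b,s,t) such that every n-vertex graph G containing no copy of the complete bipartite graph K_{s,t} contains at most C · n^{a + b - ab/s} copies of K_{a,b}. -/
/-!
A copy of `K_{a,b}` is determined by its `b`-part `B` together with an `a`-subset of the common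
neighbourhood `N(B)`, so there are at most `∑_B d(B)^a` copies, where `d(B) = |N(B)|`.
Double counting pairs `(S, B)` with `|S| = s` and `S ⊆ N(B)` gives
`∑_B C(d(B), s) = ∑_S C(d(S), b)`, and `K_{s,t}`-freeness forces `d(S) < t`; hence
`∑_B d(B)^s = O(n^s)`. Hölder's inequality over the at most `n^b` sets `B` then gives
`∑_B d(B)^a ≤ (n^b)^{1 - a/s} (O(n^s))^{a/s} = O(n^{a + b - ab/s})`.
-/

/-- A graph `G` contains a copy of `K_{s,t}`: disjoint sets of sizes `s`, `t`
with all edges between them present. -/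
def ContainsKst {n : ℕ} (G : SimpleGraph (Fin n)) (s t : ℕ) : Prop :=
  ∃ A B : Finset (Fin n), Disjoint A B ∧ A.card = s ∧ B.card = t ∧
    ∀ a ∈ A, ∀ b ∈ B, G.Adj a b

open Finset

namespace Nat

theorem pow_le_two_mul_pow_mul_choose_add_one (s m : ℕ) :
    m ^ s ≤ (2 * s) ^ s * (m.choose s + 1) := by
  rcases lt_or_ge m (2 * s) with hm | hm
  · calc m ^ s ≤ (2 * s) ^ s := Nat.pow_le_pow_left hm.le s
      _ ≤ (2 * s) ^ s * (m.choose s + 1) := Nat.le_mul_of_pos_right _ (Nat.succ_pos _)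
  · calc m ^ s ≤ (2 * (m + 1 - s)) ^ s := Nat.pow_le_pow_left (by omega) s
      _ = 2 ^ s * (m + 1 - s) ^ s := Nat.mul_pow ..
      _ ≤ 2 ^ s * (s ! * m.choose s) := by
        rw [← descFactorial_eq_factorial_mul_choose]; gcongr; exact pow_sub_le_descFactorial m s
      _ ≤ 2 ^ s * (s ^ s * m.choose s) := by gcongr; exact factorial_le_pow s
      _ ≤ (2 * s) ^ s * (m.choose s + 1) := by rw [Nat.mul_pow, ← mul_assoc]; gcongr; omega

end Nat

theorem Finset.card_filter_subset_powersetCard {α : Type*} [Fintype α] [DecidableEq α] (k : ℕ)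
    (u : Finset α) :
    #{B ∈ powersetCard k (univ : Finset α) | B ⊆ u} = (#u).choose k := by
  rw [← card_powersetCard]
  congr 1
  ext B
  simp only [mem_filter, mem_powersetCard, subset_univ, true_and]
  exact and_comm

theorem Real.sum_rpow_le_card_rpow_mul_rpow_sum {ι : Type*} (I : Finset ι) (f : ι → ℝ)
    (hf : ∀ i, 0 ≤ f i) {θ : ℝ} (hθ₀ : 0 ≤ θ) (hθ₁ : θ ≤ 1) :
    ∑ i ∈ I, f i ^ θ ≤ (#I : ℝ) ^ (1 - θ) * (∑ i ∈ I, f i) ^ θ := by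
  rcases hθ₀.eq_or_lt with rfl | hθ
  · simp
  have := inner_le_weight_mul_Lp_of_nonneg I (one_le_inv₀ hθ |>.2 hθ₁) (fun _ ↦ 1)
    (fun i ↦ f i ^ θ) (fun _ ↦ zero_le_one) (fun i ↦ rpow_nonneg (hf i) θ)
  simpa [inv_inv, ← rpow_mul (hf _), mul_inv_cancel₀ hθ.ne'] using this

theorem Real.sum_pow_le_rpow_mul_rpow_of_sum_pow_le {ι : Type*} {I : Finset ι} {f : ι → ℝ}
    (hf : ∀ i, 0 ≤ f i) {a s : ℕ} (hs : 0 < s) (has : a ≤ s) {M K : ℝ} (hM : #I ≤ M)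
    (hK : ∑ i ∈ I, f i ^ s ≤ K) :
    ∑ i ∈ I, f i ^ a ≤ M ^ (1 - (a : ℝ) / s) * K ^ ((a : ℝ) / s) := by
  have hθ₁ : (a : ℝ) / s ≤ 1 := div_le_one_of_le₀ (by exact_mod_cast has) (Nat.cast_nonneg _)
  calc ∑ i ∈ I, f i ^ a
      = ∑ i ∈ I, (f i ^ s) ^ ((a : ℝ) / s) := sum_congr rfl fun i _ ↦ by
        rw [← rpow_natCast (f i) s, ← rpow_mul (hf i), mul_div_cancel₀ _ (by positivity),
          rpow_natCast]
    _ ≤ (#I : ℝ) ^ (1 - (a : ℝ) / s) * (∑ i ∈ I, f i ^ s) ^ ((a : ℝ) / s) :=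
        sum_rpow_le_card_rpow_mul_rpow_sum _ _ (fun i ↦ pow_nonneg (hf i) s)
          (by positivity) hθ₁
    _ ≤ M ^ (1 - (a : ℝ) / s) * K ^ ((a : ℝ) / s) := by
        have hsum : 0 ≤ ∑ i ∈ I, f i ^ s := sum_nonneg fun i _ ↦ pow_nonneg (hf i) s
        exact mul_le_mul (rpow_le_rpow (Nat.cast_nonneg _) hM (sub_nonneg.2 hθ₁))
          (rpow_le_rpow hsum hK (by positivity)) (rpow_nonneg hsum _)
          (rpow_nonneg ((Nat.cast_nonneg _).trans hM) _)

namespace SimpleGraph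

variable {V : Type*} [Fintype V] [DecidableEq V] (G : SimpleGraph V) [DecidableRel G.Adj]

def commonNbhd (B : Finset V) : Finset V := {v | ∀ y ∈ B, G.Adj v y}

variable {G}

theorem mem_commonNbhd {B : Finset V} {v : V} :
    v ∈ G.commonNbhd B ↔ ∀ y ∈ B, G.Adj v y := by
  simp [commonNbhd]

theorem subset_commonNbhd_comm {A B : Finset V} :
    A ⊆ G.commonNbhd B ↔ B ⊆ G.commonNbhd A := by
  simp only [subset_iff, mem_commonNbhd]
  exact ⟨fun h y hy x hx ↦ (h hx y hy).symm, fun h x hx y hy ↦ (h hy x hx).symm⟩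

theorem disjoint_of_subset_commonNbhd {A B : Finset V} (h : A ⊆ G.commonNbhd B) : Disjoint A B :=
  Finset.disjoint_left.2 fun _ hvA hvB ↦ G.irrefl (mem_commonNbhd.1 (h hvA) _ hvB)

theorem sum_choose_card_commonNbhd_comm (b s : ℕ) :
    ∑ B ∈ powersetCard b (univ : Finset V), (#(G.commonNbhd B)).choose s =
      ∑ S ∈ powersetCard s univ, (#(G.commonNbhd S)).choose b := by
  simp_rw [← card_filter_subset_powersetCard]
  convert sum_card_bipartiteAbove_eq_sum_card_bipartiteBelow
    (fun B S : Finset V ↦ S ⊆ G.commonNbhd B) using 4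
  · rfl
  · exact filter_congr fun _ _ ↦ subset_commonNbhd_comm

theorem card_copies_completeBipartite_le_sum_choose (a b : ℕ) :
    Nat.card {P : Finset (Finset V) // ∃ A B : Finset V, P = {A, B} ∧ Disjoint A B ∧
        A.card = a ∧ B.card = b ∧ ∀ x ∈ A, ∀ y ∈ B, G.Adj x y} ≤
      ∑ B ∈ powersetCard b (univ : Finset V), (#(G.commonNbhd B)).choose a := by
  set pairs := (powersetCard b (univ : Finset V)).sigma fun B ↦ powersetCard a (G.commonNbhd B)
  have copy : ∀ p ∈ pairs, ∃ A B : Finset V, ({p.2, p.1} : Finset (Finset V)) = {A, B} ∧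
      Disjoint A B ∧ A.card = a ∧ B.card = b ∧ ∀ x ∈ A, ∀ y ∈ B, G.Adj x y := by
    intro p hp
    simp only [pairs, mem_sigma, mem_powersetCard] at hp
    exact ⟨p.2, p.1, rfl, disjoint_of_subset_commonNbhd hp.2.1, hp.2.2, hp.1.2,
      fun x hx ↦ mem_commonNbhd.1 (hp.2.1 hx)⟩
  calc _ ≤ Nat.card pairs := by
        refine Nat.card_le_card_of_surjective (fun p ↦ ⟨{p.1.2, p.1.1}, copy p.1 p.2⟩) ?_
        rintro ⟨_, A, B, rfl, -, hA, hB, hAB⟩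
        refine ⟨⟨⟨B, A⟩, ?_⟩, rfl⟩
        simp only [pairs, mem_sigma, mem_powersetCard, subset_univ, true_and]
        exact ⟨hB, fun x hx ↦ mem_commonNbhd.2 (hAB x hx), hA⟩
    _ = _ := by simp only [Nat.card_eq_finsetCard, pairs, card_sigma, card_powersetCard]

end SimpleGraph

open SimpleGraph

section

variable {n s t : ℕ} {G : SimpleGraph (Fin n)} [DecidableRel G.Adj]

theorem card_commonNbhd_lt_of_not_containsKst (hG : ¬ ContainsKst G s t) {S : Finset (Fin n)}
    (hS : #S = s) : #(G.commonNbhd S) < t := by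
  by_contra! h
  obtain ⟨T, hT, rfl⟩ := exists_subset_card_eq h
  exact hG ⟨S, T, disjoint_of_subset_commonNbhd (subset_commonNbhd_comm.1 hT), hS, rfl,
    fun x hx y hy ↦ (mem_commonNbhd.1 (hT hy) x hx).symm⟩

theorem sum_pow_card_commonNbhd_le_of_not_containsKst (hG : ¬ ContainsKst G s t) {b : ℕ}
    (hb : 0 < b) (hbs : b ≤ s) :
    ∑ B ∈ powersetCard b (univ : Finset (Fin n)), #(G.commonNbhd B) ^ s ≤
      (2 * s) ^ s * (t ^ b + 1) * n ^ s := by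
  have sum_choose_le : ∑ B ∈ powersetCard b (univ : Finset (Fin n)),
      (#(G.commonNbhd B)).choose s ≤ n ^ s * t ^ b := by
    rw [sum_choose_card_commonNbhd_comm]
    calc _ ≤ ∑ S ∈ powersetCard s (univ : Finset (Fin n)), t ^ b :=
          sum_le_sum fun S hS ↦ (Nat.choose_le_pow _ _).trans <| Nat.pow_le_pow_left
            (card_commonNbhd_lt_of_not_containsKst hG (mem_powersetCard.1 hS).2).le _
      _ ≤ n ^ s * t ^ b := by
          rw [sum_const, card_powersetCard, card_univ, Fintype.card_fin, smul_eq_mul]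
          gcongr
          exact Nat.choose_le_pow _ _
  have card_le : #(powersetCard b (univ : Finset (Fin n))) ≤ n ^ s := by
    rw [card_powersetCard, card_univ, Fintype.card_fin]
    rcases n.eq_zero_or_pos with rfl | hn
    · simp [Nat.choose_eq_zero_of_lt hb]
    · exact (Nat.choose_le_pow n b).trans (Nat.pow_le_pow_right hn hbs)
  calc _ ≤ ∑ B ∈ powersetCard b (univ : Finset (Fin n)),
          (2 * s) ^ s * ((#(G.commonNbhd B)).choose s + 1) :=
        sum_le_sum fun B _ ↦ Nat.pow_le_two_mul_pow_mul_choose_add_one _ _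
    _ = (2 * s) ^ s * (∑ B ∈ powersetCard b (univ : Finset (Fin n)),
          (#(G.commonNbhd B)).choose s + #(powersetCard b (univ : Finset (Fin n)))) := by
        rw [← mul_sum, sum_add_distrib, card_eq_sum_ones]
    _ ≤ (2 * s) ^ s * (n ^ s * t ^ b + n ^ s) := by gcongr
    _ = (2 * s) ^ s * (t ^ b + 1) * n ^ s := by ring

end

theorem count_Kab_in_Kst_free_general
    (s t a b : ℕ) (hb : 0 < b)
    (has : a < s) (hbs : b ≤ s) :
    ∃ C : ℝ, 0 < C ∧ ∀ n : ℕ, ∀ G : SimpleGraph (Fin n), ¬ ContainsKst G s t →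
      (Nat.card {P : Finset (Finset (Fin n)) //
          ∃ A B : Finset (Fin n), P = {A, B} ∧ Disjoint A B ∧
            A.card = a ∧ B.card = b ∧ ∀ x ∈ A, ∀ y ∈ B, G.Adj x y} : ℝ)
        ≤ C * (n : ℝ) ^ ((a : ℝ) + b - a * b / s) := by
  have hs : 0 < s := by omega
  set D : ℝ := (2 * s) ^ s * (t ^ b + 1)
  have hD : 0 < D := by positivity
  refine ⟨D ^ ((a : ℝ) / s), Real.rpow_pos_of_pos hD _, fun n G hG ↦ ?_⟩
  classical
  have hsum : ∑ B ∈ powersetCard b (univ : Finset (Fin n)), (#(G.commonNbhd B) : ℝ) ^ s ≤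
      D * (n : ℝ) ^ s := by
    simp only [D]
    exact_mod_cast sum_pow_card_commonNbhd_le_of_not_containsKst hG hb hbs
  have hcard : (#(powersetCard b (univ : Finset (Fin n))) : ℝ) ≤ (n : ℝ) ^ b := by
    rw [card_powersetCard, card_univ, Fintype.card_fin]
    exact_mod_cast Nat.choose_le_pow n b
  calc (Nat.card _ : ℝ)
      ≤ ∑ B ∈ powersetCard b (univ : Finset (Fin n)), (#(G.commonNbhd B) : ℝ) ^ a := by
        exact_mod_cast (card_copies_completeBipartite_le_sum_choose (G := G) a b).trans
          (sum_le_sum fun B _ ↦ Nat.choose_le_pow _ _)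
    _ ≤ ((n : ℝ) ^ b) ^ (1 - (a : ℝ) / s) * (D * n ^ s) ^ ((a : ℝ) / s) :=
        Real.sum_pow_le_rpow_mul_rpow_of_sum_pow_le (fun _ ↦ Nat.cast_nonneg _) hs has.le
          hcard hsum
    _ = D ^ ((a : ℝ) / s) * (n : ℝ) ^ ((a : ℝ) + b - a * b / s) := by
        have hθ₁ : (a : ℝ) / s ≤ 1 :=
          div_le_one_of_le₀ (by exact_mod_cast has.le) (Nat.cast_nonneg _)
        rw [Real.mul_rpow hD.le (by positivity), ← Real.rpow_natCast, ← Real.rpow_natCast,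
          ← Real.rpow_mul (by positivity), ← Real.rpow_mul (by positivity), mul_left_comm,
          ← Real.rpow_add_of_nonneg (by positivity)
            (mul_nonneg (Nat.cast_nonneg _) (sub_nonneg.2 hθ₁)) (by positivity)]
        congr 2
        field_simp
        ring

/-- In a `K_{s,t}`-free graph with `a < s` and `b ≤ s`, the number of copies of
`K_{a,b}` (unordered pairs of parts) is at most `C · n^{a+b-ab/s}`. -/
theorem count_Kab_in_Kst_free
    (s t a b : ℕ) (hs : 0 < s) (ht : 0 < t) (ha : 0 < a) (hb : 0 < b)
    (has : a < s) (hbs : b ≤ s) :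
    ∃ C : ℝ, 0 < C ∧ ∀ n : ℕ, ∀ G : SimpleGraph (Fin n), ¬ ContainsKst G s t →
      (Nat.card {P : Finset (Finset (Fin n)) //
          ∃ A B : Finset (Fin n), P = {A, B} ∧ Disjoint A B ∧
            A.card = a ∧ B.card = b ∧ ∀ x ∈ A, ∀ y ∈ B, G.Adj x y} : ℝ)
        ≤ C * (n : ℝ) ^ ((a : ℝ) + b - a * b / s) :=
  count_Kab_in_Kst_free_general s t a b hb has hbs
end

section
/- Let r ≥ 2 and let s_1 ≤ s_2 ≤ ... ≤ s_r be positive integers. Then there exists a constant C = C(s_1,...,s_r) such that every n-vertex r-uniform hypergraph containing no copy of the complete r-partite r-uniform hypergraph K^{(r)}_{s_1,...,s_r} has at most C · n^{r - 1/(s_1 s_2 ⋯ s_{r-1})} edges. -/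
/-- A `k`-uniform hypergraph `H` contains a copy of the complete `k`-partite
hypergraph with part sizes `sz`: disjoint sets `A i` of sizes `sz i` such that
every transversal `k`-set is an edge. -/
def ContainsCompletePartite {V : Type*} [DecidableEq V]
    (H : Finset (Finset V)) {k : ℕ} (sz : Fin k → ℕ) : Prop :=
  ∃ A : Fin k → Finset V, (∀ i j, i ≠ j → Disjoint (A i) (A j)) ∧
    (∀ i, (A i).card = sz i) ∧
    ∀ g : Fin k → V, (∀ i, g i ∈ A i) → Finset.image g Finset.univ ∈ H

/-!
Induction on the uniformity, splitting off the first part. Let `H` be `(r+1)`-uniform on `n`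
vertices with no `K_{s_0,…,s_r}`, and for an `r`-set `f` let `N(f)` be the set of vertices `v ∉ f`
with `f ∪ {v} ∈ H`, so that `∑_f |N(f)| = (r+1)|H|`. For an `s_0`-set `S`, the `r`-sets `f` with
`S ⊆ N(f)` form an `r`-uniform hypergraph with no `K_{s_1,…,s_r}` (together with `S` a copy would
give a `K_{s_0,…,s_r}` in `H`), so by induction it has `O(n^{r - 1/(s_1⋯s_{r-1})})` edges.
Double counting pairs `(S, f)` bounds `∑_f binom(|N(f)|, s_0)` by
`O(n^{s_0 + r - 1/(s_1⋯s_{r-1})})`. As `d^{s_0} ≤ 2^{s_0} s_0! binom(d, s_0) + (2 s_0)^{s_0}`,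
Jensen's inequality for `x ↦ x^{s_0}` over the `≤ n^r` sets `f` gives
`|H|^{s_0} = O(n^{r(s_0-1) + s_0 + r - 1/(s_1⋯s_{r-1})}) = O(n^{s_0 (r+1 - 1/(s_0⋯s_{r-1}))})`.
-/

open Finset

lemma pow_le_two_pow_mul_factorial_mul_choose_add (d k : ℕ) :
    d ^ k ≤ 2 ^ k * (k.factorial * d.choose k) + (2 * k) ^ k := by
  rcases le_or_gt d (2 * k) with h | h
  · exact le_add_left (Nat.pow_le_pow_left h k)
  · calc d ^ k ≤ (2 * (d - k)) ^ k := Nat.pow_le_pow_left (by omega) k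
      _ = 2 ^ k * (d - k) ^ k := mul_pow ..
      _ ≤ 2 ^ k * d.descFactorial k :=
        Nat.mul_le_mul_left _ ((Nat.pow_le_pow_left (by omega) k).trans
          (Nat.pow_sub_le_descFactorial d k))
      _ = 2 ^ k * (k.factorial * d.choose k) := by rw [Nat.descFactorial_eq_factorial_mul_choose]
      _ ≤ _ := Nat.le_add_right _ _

lemma le_mul_rpow_of_pow_le_mul_rpow_mul {x K n X : ℝ} {k : ℕ} (hk : k ≠ 0) (hx : 0 ≤ x)
    (hK : 1 ≤ K) (hn : 0 ≤ n) (h : x ^ k ≤ K * n ^ (k * X)) : x ≤ K * n ^ X := by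
  refine (pow_le_pow_iff_left₀ hx (by positivity) hk).1 (h.trans ?_)
  rw [mul_pow, mul_comm (k : ℝ), Real.rpow_mul hn, Real.rpow_natCast]
  gcongr
  exact le_self_pow₀ hK hk

section
variable {V : Type*} [Fintype V] [DecidableEq V] (H : Finset (Finset V))

def nbhd (f : Finset V) : Finset V := {v | v ∉ f ∧ insert v f ∈ H}

def commonLink (r : ℕ) (S : Finset V) : Finset (Finset V) :=
  {f ∈ powersetCard r univ | S ⊆ nbhd H f}

variable {H}

lemma card_filter_insert_mem_eq {r : ℕ} (huni : ∀ e ∈ H, #e = r + 1) (v : V) :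
    #{f ∈ powersetCard r univ | v ∉ f ∧ insert v f ∈ H} = #{e ∈ H | v ∈ e} := by
  refine card_bij' (fun f _ => insert v f) (fun e _ => erase e v) ?_ ?_ ?_ ?_
  · intro f hf
    simp only [mem_filter] at hf ⊢
    exact ⟨hf.2.2, mem_insert_self v f⟩
  · intro e he
    simp only [mem_filter, mem_powersetCard] at he ⊢
    refine ⟨⟨subset_univ _, ?_⟩, notMem_erase v e, by rw [insert_erase he.2]; exact he.1⟩
    rw [card_erase_of_mem he.2, huni e he.1, Nat.add_sub_cancel]
  · intro f hf
    exact erase_insert (mem_filter.1 hf).2.1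
  · intro e he
    exact insert_erase (mem_filter.1 he).2

lemma sum_card_nbhd {r : ℕ} (huni : ∀ e ∈ H, #e = r + 1) :
    ∑ f ∈ powersetCard r univ, #(nbhd H f) = (r + 1) * #H := calc
  _ = ∑ v, #{f ∈ powersetCard r univ | v ∉ f ∧ insert v f ∈ H} :=
    sum_card_bipartiteAbove_eq_sum_card_bipartiteBelow _
  _ = ∑ v, #{e ∈ H | v ∈ e} := by simp_rw [card_filter_insert_mem_eq huni]
  _ = ∑ e ∈ H, #{v | v ∈ e} :=
    (sum_card_bipartiteAbove_eq_sum_card_bipartiteBelow (fun e v => v ∈ e)).symm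
  _ = ∑ e ∈ H, #e := by simp only [filter_univ_mem]
  _ = (r + 1) * #H := by rw [sum_congr rfl huni, sum_const, smul_eq_mul, mul_comm]

lemma sum_card_commonLink (r k : ℕ) :
    ∑ S ∈ powersetCard k univ, #(commonLink H r S) =
      ∑ f ∈ powersetCard r univ, (#(nbhd H f)).choose k := by
  refine (sum_card_bipartiteAbove_eq_sum_card_bipartiteBelow (fun S f => S ⊆ nbhd H f)).trans
    (sum_congr rfl fun f _ => ?_)
  rw [bipartiteBelow, ← card_powersetCard]
  congr 1
  ext S
  simp [mem_powersetCard, and_comm]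

lemma containsCompletePartite_cons_of_commonLink {k : ℕ} {sz : Fin k → ℕ} (hsz : ∀ i, 0 < sz i)
    {S : Finset V} (h : ContainsCompletePartite (commonLink H k S) sz) :
    ContainsCompletePartite H (Fin.cons #S sz : Fin (k + 1) → ℕ) := by
  obtain ⟨A, hdisj, hcard, htrans⟩ := h
  have hlink : ∀ g : Fin k → V, (∀ i, g i ∈ A i) →
      ∀ v ∈ S, v ∉ image g univ ∧ insert v (image g univ) ∈ H := fun g hg v hv => by
    simpa [nbhd] using (mem_filter.1 (htrans g hg)).2 hv
  choose a ha using fun i => card_pos.1 ((hcard i).symm ▸ hsz i)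
  -- a transversal through `v ∈ A i` is an `f ∋ v`, while `S ⊆ nbhd H f` avoids `f`
  have hSA : ∀ i, Disjoint S (A i) := by
    refine fun i => disjoint_left.2 fun v hv hvA => ?_
    have hg : ∀ j, Function.update a i v j ∈ A j := fun j => by
      rcases eq_or_ne j i with rfl | hj
      · simpa using hvA
      · simpa [hj] using ha j
    exact (hlink _ hg v hv).1 (mem_image.2 ⟨i, mem_univ i, by simp⟩)
  refine ⟨Fin.cons S A, ?_, Fin.cons rfl hcard, fun g hg => ?_⟩
  · intro i j hij
    cases i using Fin.cases <;> cases j using Fin.cases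
    · exact absurd rfl hij
    · exact hSA _
    · exact (hSA _).symm
    · exact hdisj _ _ (fun h => hij (congrArg Fin.succ h))
  · have himage : image g univ = insert (g 0) (image (Fin.tail g) univ) := by
      rw [Fin.univ_succ, cons_eq_insert, image_insert, map_eq_image, image_image]; rfl
    rw [himage]
    exact (hlink (Fin.tail g) (fun i => hg i.succ) (g 0) (hg 0)).2

lemma card_pow_le_of_card_commonLink_le {r q : ℕ} (huni : ∀ e ∈ H, #e = r + 1) {B : ℝ}
    (hB₀ : 0 ≤ B) (hB : ∀ S ∈ powersetCard (q + 1) univ, (#(commonLink H r S) : ℝ) ≤ B) :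
    (#H : ℝ) ^ (q + 1) ≤ (Fintype.card V : ℝ) ^ (r * q) *
      (2 ^ (q + 1) * (q + 1).factorial * ((Fintype.card V : ℝ) ^ (q + 1) * B) +
        (2 * (q + 1)) ^ (q + 1) * (Fintype.card V : ℝ) ^ r) := by
  set n := Fintype.card V
  set F := powersetCard r (univ : Finset V)
  have hF : (#F : ℝ) ≤ n ^ r := by
    rw [card_powersetCard, card_univ]
    exact_mod_cast Nat.choose_le_pow n r
  have hlinks : (∑ S ∈ powersetCard (q + 1) univ, (#(commonLink H r S) : ℝ)) ≤ n ^ (q + 1) * B :=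
    calc _ ≤ #(powersetCard (q + 1) (univ : Finset V)) • B := sum_le_card_nsmul _ _ _ hB
      _ ≤ n ^ (q + 1) * B := by
        rw [nsmul_eq_mul, card_powersetCard, card_univ]
        exact mul_le_mul_of_nonneg_right (by exact_mod_cast Nat.choose_le_pow n (q + 1)) hB₀
  have hsum : (∑ S ∈ powersetCard (q + 1) univ, (#(commonLink H r S) : ℝ)) =
      ∑ f ∈ F, ((#(nbhd H f)).choose (q + 1) : ℝ) := by
    exact_mod_cast sum_card_commonLink r (q + 1)
  calc (#H : ℝ) ^ (q + 1) ≤ ((r + 1) * #H) ^ (q + 1) := by gcongr; nlinarith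
    _ = (∑ f ∈ F, (#(nbhd H f) : ℝ)) ^ (q + 1) := by
      exact_mod_cast congrArg (· ^ (q + 1)) (sum_card_nbhd huni).symm
    _ ≤ #F ^ q * ∑ f ∈ F, (#(nbhd H f) : ℝ) ^ (q + 1) := pow_sum_le_card_mul_sum_pow (by simp) q
    _ ≤ #F ^ q * ∑ f ∈ F, (2 ^ (q + 1) * ((q + 1).factorial * (#(nbhd H f)).choose (q + 1)) +
          (2 * (q + 1)) ^ (q + 1) : ℝ) := by
      gcongr with f
      exact_mod_cast pow_le_two_pow_mul_factorial_mul_choose_add _ (q + 1)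
    _ = #F ^ q * (2 ^ (q + 1) * (q + 1).factorial *
          ∑ S ∈ powersetCard (q + 1) univ, (#(commonLink H r S) : ℝ) +
          (2 * (q + 1)) ^ (q + 1) * #F) := by
      rw [sum_add_distrib, sum_const, nsmul_eq_mul, ← mul_sum, ← mul_sum, hsum]
      ring
    _ ≤ (n : ℝ) ^ (r * q) * (2 ^ (q + 1) * (q + 1).factorial * (n ^ (q + 1) * B) +
          (2 * (q + 1)) ^ (q + 1) * n ^ r) := by
      have hsum₀ : 0 ≤ ∑ S ∈ powersetCard (q + 1) univ, (#(commonLink H r S) : ℝ) :=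
        sum_nonneg fun _ _ => Nat.cast_nonneg _
      have hFq : (#F : ℝ) ^ q ≤ (n : ℝ) ^ (r * q) := by
        rw [pow_mul]
        exact pow_le_pow_left₀ (Nat.cast_nonneg _) hF q
      exact mul_le_mul hFq (add_le_add (mul_le_mul_of_nonneg_left hlinks (by positivity))
        (mul_le_mul_of_nonneg_left hF (by positivity)))
        (add_nonneg (mul_nonneg (by positivity) hsum₀) (by positivity)) (by positivity)

lemma card_le_rpow_of_card_commonLink_le {r q : ℕ} {C' t : ℝ} (hC' : 0 ≤ C') (ht : 1 ≤ t)
    (huni : ∀ e ∈ H, #e = r + 2)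
    (hlink : ∀ S ∈ powersetCard (q + 1) univ,
      (#(commonLink H (r + 1) S) : ℝ) ≤ C' * Fintype.card V ^ ((r + 1 : ℝ) - 1 / t)) :
    (#H : ℝ) ≤ (2 ^ (q + 1) * (q + 1).factorial * C' + (2 * (q + 1)) ^ (q + 1)) *
      Fintype.card V ^ ((r + 2 : ℝ) - 1 / ((q + 1) * t)) := by
  set n := (Fintype.card V : ℝ)
  set K : ℝ := 2 ^ (q + 1) * (q + 1).factorial * C' + (2 * (q + 1)) ^ (q + 1) with hK_def
  set X : ℝ := (r + 2 : ℝ) - 1 / ((q + 1) * t)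
  rcases H.eq_empty_or_nonempty with rfl | ⟨e, he⟩
  · simp only [card_empty, Nat.cast_zero]
    positivity
  have hn : 1 ≤ n := by
    obtain ⟨v, -⟩ := card_pos.1 (by rw [huni e he]; omega)
    exact Nat.one_le_cast.2 (Fintype.card_pos_iff.2 ⟨v⟩)
  have hK : 1 ≤ K := le_add_of_nonneg_of_le (by positivity)
    (one_le_pow₀ (by linarith [(Nat.cast_nonneg q : (0 : ℝ) ≤ q)]))
  have ht₀ : 0 < t := by linarith
  have hexp₁ : (((r + 1) * q + (q + 1) : ℕ) : ℝ) + ((r + 1 : ℝ) - 1 / t) = (q + 1) * X := by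
    simp only [X]
    field_simp
    push_cast
    ring
  have hexp₂ : (((r + 1) * q + (r + 1) : ℕ) : ℝ) ≤ (q + 1) * X := by
    have : 1 / t ≤ 1 := (div_le_one ht₀).2 ht
    rw [← hexp₁]
    push_cast
    linarith [(Nat.cast_nonneg q : (0 : ℝ) ≤ q)]
  refine le_mul_rpow_of_pow_le_mul_rpow_mul (Nat.succ_ne_zero q) (Nat.cast_nonneg _) hK
    (Nat.cast_nonneg _) ?_
  push_cast
  calc
    _ ≤ n ^ ((r + 1) * q) *
          (2 ^ (q + 1) * (q + 1).factorial * (n ^ (q + 1) * (C' * n ^ ((r + 1 : ℝ) - 1 / t))) +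
            (2 * (q + 1)) ^ (q + 1) * n ^ (r + 1)) :=
      card_pow_le_of_card_commonLink_le huni (by positivity) hlink
    _ = 2 ^ (q + 1) * (q + 1).factorial * C' *
            n ^ ((((r + 1) * q + (q + 1) : ℕ) : ℝ) + ((r + 1 : ℝ) - 1 / t)) +
          (2 * (q + 1)) ^ (q + 1) * n ^ ((((r + 1) * q + (r + 1) : ℕ) : ℝ)) := by
      rw [Real.rpow_add (by positivity), Real.rpow_natCast, Real.rpow_natCast, pow_add, pow_add]
      ring
    _ ≤ 2 ^ (q + 1) * (q + 1).factorial * C' * n ^ ((q + 1) * X) +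
          (2 * (q + 1)) ^ (q + 1) * n ^ ((q + 1) * X) := by
      rw [hexp₁]
      gcongr
    _ = K * n ^ ((q + 1) * X) := by rw [hK_def]; ring

lemma card_lt_of_not_containsCompletePartite_of_card_eq_one (huni : ∀ e ∈ H, #e = 1)
    {s : Fin 1 → ℕ} (hH : ¬ContainsCompletePartite H s) : #H < s 0 := by
  set B : Finset V := {v | {v} ∈ H}
  have hHB : H ⊆ B.image singleton := fun e he => by
    obtain ⟨v, rfl⟩ := card_eq_one.1 (huni e he)
    simpa [B] using he
  by_contra! hle
  obtain ⟨A, hAB, hA⟩ := exists_subset_card_eq (hle.trans ((card_le_card hHB).trans card_image_le))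
  refine hH ⟨fun _ => A, fun i j hij => absurd (Subsingleton.elim i j) hij, Fin.forall_fin_one.2 hA,
    fun g hg => ?_⟩
  simpa [B] using hAB (hg 0)

end

universe u

theorem exists_card_le_of_not_containsCompletePartite (r : ℕ) (s : Fin (r + 1) → ℕ)
    (hs : ∀ i, 0 < s i) :
    ∃ C : ℝ, 0 < C ∧ ∀ (V : Type u) [Fintype V] [DecidableEq V] (H : Finset (Finset V)),
      (∀ e ∈ H, #e = r + 1) → ¬ContainsCompletePartite H s →
      (#H : ℝ) ≤ C * Fintype.card V ^ ((r + 1 : ℝ) - 1 / ∏ i : Fin r, (s i.castSucc : ℝ)) := by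
  induction r with
  | zero =>
    refine ⟨s 0, by exact_mod_cast hs 0, fun V _ _ H huni hH => ?_⟩
    have hcard := card_lt_of_not_containsCompletePartite_of_card_eq_one huni hH
    simpa using (Nat.cast_le (α := ℝ)).2 hcard.le
  | succ r ih =>
    obtain ⟨C', hC', hC'H⟩ := ih (Fin.tail s) (fun i => hs i.succ)
    obtain ⟨q, hq⟩ := Nat.exists_eq_add_one.2 (hs 0)
    refine ⟨2 ^ (q + 1) * (q + 1).factorial * C' + (2 * (q + 1)) ^ (q + 1), by positivity,
      fun V _ _ H huni hH => ?_⟩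
    have hprod : ∏ i : Fin (r + 1), (s i.castSucc : ℝ) =
        (q + 1) * ∏ i : Fin r, (Fin.tail s i.castSucc : ℝ) := by
      rw [Fin.prod_univ_succ]
      simp [Fin.tail, hq]
    have ht : 1 ≤ ∏ i : Fin r, (Fin.tail s i.castSucc : ℝ) :=
      Finset.one_le_prod fun i _ => by exact_mod_cast hs _
    convert card_le_rpow_of_card_commonLink_le hC'.le ht huni fun S hS =>
      hC'H V _ (fun f hf => (mem_powersetCard.1 (mem_filter.1 hf).1).2) fun hlink => hH ?_ using 3
    · rw [hprod]; push_cast; ring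
    · have := containsCompletePartite_cons_of_commonLink (sz := Fin.tail s)
        (fun i => hs i.succ) hlink
      rwa [(mem_powersetCard.1 hS).2, ← hq, Fin.cons_self_tail] at this

theorem erdos_complete_partite_free_edge_bound_general
    (m : ℕ) (s : Fin (m + 1) → ℕ) (hs : ∀ i, 0 < s i) :
    ∃ C : ℝ, 0 < C ∧ ∀ n : ℕ, ∀ H : Finset (Finset (Fin n)),
      (∀ e ∈ H, e.card = m + 1) → ¬ ContainsCompletePartite H s →
      (H.card : ℝ) ≤ C * (n : ℝ) ^
        ((m + 1 : ℝ) - 1 / ∏ i : Fin m, (s i.castSucc : ℝ)) := by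
  obtain ⟨C, hC, hbound⟩ := exists_card_le_of_not_containsCompletePartite m s hs
  exact ⟨C, hC, fun n H huni hH => by simpa using hbound (Fin n) H huni hH⟩

/-- Erdős (1964): an `n`-vertex `K^{(r)}_{s_1,…,s_r}`-free `r`-uniform hypergraph
(`r = m+1 ≥ 2`, `s_1 ≤ ⋯ ≤ s_r`) has at most `C · n^{r - 1/(s_1⋯s_{r-1})}` edges. -/
theorem erdos_complete_partite_free_edge_bound
    (m : ℕ) (hm : 1 ≤ m) (s : Fin (m + 1) → ℕ) (hs : ∀ i, 0 < s i)
    (hmono : Monotone s) :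
    ∃ C : ℝ, 0 < C ∧ ∀ n : ℕ, ∀ H : Finset (Finset (Fin n)),
      (∀ e ∈ H, e.card = m + 1) → ¬ ContainsCompletePartite H s →
      (H.card : ℝ) ≤ C * (n : ℝ) ^
        ((m + 1 : ℝ) - 1 / ∏ i : Fin m, (s i.castSucc : ℝ)) :=
  erdos_complete_partite_free_edge_bound_general m s hs
end

section
/- Let q be a prime power, r, b, s positive integers, and let P be the F_q-vector space of symmetric polynomials in r blocks of b variables, of degree at most bs in each block. Let U be a set of r-element subsets of F_q^b such that binomial(|U|,2) < q, binomial(|V|,2) < q where V is the union of all elements of the r-sets in U, all r-sets in U consist of points with pairwise distinct first coordinates after a suitable invertible linear change of coordinates, and |U| ≤ bs. If f is chosen uniformly at random from P, then the probability that f vanishes simultaneously on all r-sets in U equals exactly q^{-|U|}. -/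
open MvPolynomial

/-- `f` is symmetric under permuting the `r` blocks of `b` variables. -/
def BlockSymmetric (r b : ℕ) (F : Type) [Field F]
    (f : MvPolynomial (Fin r × Fin b) F) : Prop :=
  ∀ σ : Equiv.Perm (Fin r), rename (fun p : Fin r × Fin b => (σ p.1, p.2)) f = f

/-- Every monomial of `f` has total degree at most `d` in each block. -/
def BlockDegLE (r b d : ℕ) (F : Type) [Field F]
    (f : MvPolynomial (Fin r × Fin b) F) : Prop :=
  ∀ μ ∈ f.support, ∀ i : Fin r, (∑ j : Fin b, μ (i, j)) ≤ d

/-- A symmetric polynomial `f` vanishes on the `r`-set `u ⊆ F_q^b`. -/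
def VanishesOn (r b : ℕ) (F : Type) [Field F] [DecidableEq F]
    (f : MvPolynomial (Fin r × Fin b) F) (u : Finset (Fin b → F)) : Prop :=
  ∀ g : Fin r → (Fin b → F), Function.Injective g →
    Finset.image g Finset.univ = u → eval (fun p : Fin r × Fin b => g p.1 p.2) f = 0

namespace RSPVPaux

variable {r b : ℕ} {F : Type} [Field F]

/-- degree of a monomial in block `i` -/
def bdeg (b : ℕ) (i : Fin r) (μ : (Fin r × Fin b) →₀ ℕ) : ℕ := ∑ j : Fin b, μ (i, j)

lemma bdeg_add (i : Fin r) (μ ν : (Fin r × Fin b) →₀ ℕ) :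
    bdeg b i (μ + ν) = bdeg b i μ + bdeg b i ν := by
  simp [bdeg, Finset.sum_add_distrib]

lemma bdeg_prod_le {ι : Type*} (s : Finset ι) (g : ι → MvPolynomial (Fin r × Fin b) F)
    (d : ι → ℕ) (i : Fin r)
    (h : ∀ x ∈ s, ∀ μ ∈ (g x).support, bdeg b i μ ≤ d x) :
    ∀ μ ∈ (∏ x ∈ s, g x).support, bdeg b i μ ≤ ∑ x ∈ s, d x := by
  classical
  induction s using Finset.cons_induction with
  | empty =>
    intro μ hμ
    have h1 : (1 : MvPolynomial (Fin r × Fin b) F) = monomial 0 1 := by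
      simp [monomial_eq]
    rw [Finset.prod_empty, h1] at hμ
    have := support_monomial_subset hμ
    simp only [Finset.mem_singleton] at this
    subst this
    simp [bdeg]
  | cons a s ha ih =>
    intro μ hμ
    rw [Finset.prod_cons] at hμ
    have hsub := support_mul (g a) (∏ x ∈ s, g x)
    have := hsub hμ
    rw [Finset.mem_add] at this
    obtain ⟨μ₁, hμ₁, μ₂, hμ₂, rfl⟩ := this
    rw [Finset.sum_cons, bdeg_add]
    exact Nat.add_le_add (h a (Finset.mem_cons_self a s) μ₁ hμ₁)
      (ih (fun x hx => h x (Finset.mem_cons_of_mem hx)) μ₂ hμ₂)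

variable (ℓ : ((Fin b → F)) →ₗ[F] F)

/-- the linear form `ℓ` applied to block `i` -/
noncomputable def lin (r : ℕ) (i : Fin r) : MvPolynomial (Fin r × Fin b) F :=
  ∑ j : Fin b, C (ℓ fun k => if j = k then 1 else 0) * X (i, j)

lemma eval_lin (i : Fin r) (g : Fin r → (Fin b → F)) :
    eval (fun p : Fin r × Fin b => g p.1 p.2) (lin ℓ r i) = ℓ (g i) := by
  rw [LinearMap.pi_apply_eq_sum_univ ℓ (g i)]
  simp [lin, mul_comm, smul_eq_mul]

lemma rename_lin (σ : Equiv.Perm (Fin r)) (i : Fin r) :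
    rename (fun p : Fin r × Fin b => (σ p.1, p.2)) (lin ℓ r i) = lin ℓ r (σ i) := by
  simp [lin]

/-- one factor `a - ℓ(Xⁱ)` -/
noncomputable def factor (r : ℕ) (a : F) (i : Fin r) : MvPolynomial (Fin r × Fin b) F :=
  C a - lin ℓ r i

/-- the symmetric polynomial `∏ᵢ (a - ℓ(Xⁱ))` -/
noncomputable def Apoly (r : ℕ) (a : F) : MvPolynomial (Fin r × Fin b) F :=
  ∏ i : Fin r, factor ℓ r a i

lemma eval_Apoly (a : F) (g : Fin r → (Fin b → F)) :
    eval (fun p : Fin r × Fin b => g p.1 p.2) (Apoly ℓ r a) = ∏ i : Fin r, (a - ℓ (g i)) := by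
  simp only [Apoly, map_prod, factor, map_sub, eval_C]
  exact Finset.prod_congr rfl fun i _ => by rw [eval_lin]

lemma Apoly_symm (a : F) : BlockSymmetric r b F (Apoly ℓ r a) := by
  intro σ
  simp only [Apoly, map_prod, factor, map_sub, rename_C]
  rw [← Equiv.prod_comp σ (fun i => C a - lin ℓ r i)]
  exact Finset.prod_congr rfl fun i _ => by rw [rename_lin]

lemma bdeg_factor (a : F) (i i' : Fin r) :
    ∀ μ ∈ (factor ℓ r a i).support, bdeg b i' μ ≤ if i = i' then 1 else 0 := by
  classical
  intro μ hμ
  have h1 := support_sub (Fin r × Fin b) (C a) (lin ℓ r i) hμ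
  rw [Finset.mem_union] at h1
  have hzero : bdeg b i' (0 : (Fin r × Fin b) →₀ ℕ) ≤ if i = i' then 1 else 0 := by
    simp [bdeg]
  rcases h1 with h1 | h1
  · rw [C_apply] at h1
    have := support_monomial_subset h1
    simp only [Finset.mem_singleton] at this
    subst this; exact hzero
  · have h2 := support_sum h1
    rw [Finset.mem_biUnion] at h2
    obtain ⟨j, -, hj⟩ := h2
    have h3 := support_mul _ _ hj
    rw [Finset.mem_add] at h3
    obtain ⟨μ₁, hμ₁, μ₂, hμ₂, rfl⟩ := h3
    rw [C_apply] at hμ₁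
    have hc := support_monomial_subset hμ₁
    simp only [Finset.mem_singleton] at hc
    subst hc
    have hx := support_monomial_subset (s := Finsupp.single ((i, j) : Fin r × Fin b) 1)
      (a := (1 : F)) hμ₂
    simp only [Finset.mem_singleton] at hx
    subst hx
    rw [bdeg_add]
    have : bdeg b i' (Finsupp.single ((i, j) : Fin r × Fin b) 1) = if i = i' then 1 else 0 := by
      simp only [bdeg, Finsupp.single_apply]
      rcases eq_or_ne i i' with rfl | hne
      · simp
      · rw [if_neg hne]
        refine Finset.sum_eq_zero fun k _ => ?_
        rw [if_neg]
        exact fun h => hne (congrArg Prod.fst h)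
    have h0 : bdeg b i' (0 : (Fin r × Fin b) →₀ ℕ) = 0 := by simp [bdeg]
    rw [this, h0, zero_add]

end RSPVPaux

open RSPVPaux in
/-- Lemma 2.2: if `U` is a family of `r`-subsets of `F_q^b` with
`C(|U|,2) < q`, `C(|V|,2) < q` (where `V` is the set of points involved),
the points of `V` get pairwise distinct first coordinates after a suitable
invertible linear change of coordinates, and `|U| ≤ bs`, then a uniformly random
symmetric polynomial `f` of degree at most `bs` in each block vanishes on all
`r`-sets of `U` with probability exactly `q^{-|U|}`. -/
theorem random_symmetric_polynomial_vanishing_probability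
    (q r b s : ℕ) (hb : 0 < b) (hs : 0 < s) (hr : 0 < r)
    (F : Type) [Field F] [Fintype F] [DecidableEq F] (hq : Fintype.card F = q) (hpp : IsPrimePow q)
    (U : Finset (Finset (Fin b → F))) (hUr : ∀ u ∈ U, u.card = r)
    (hU : U.card.choose 2 < q)
    (hV : (U.sup id).card.choose 2 < q)
    (hsimple : ∃ T : (Fin b → F) ≃ₗ[F] (Fin b → F),
      Set.InjOn (fun v : Fin b → F => T v ⟨0, hb⟩) ((U.sup id : Finset (Fin b → F)) : Set (Fin b → F)))
    (hUsize : U.card ≤ b * s) :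
    Nat.card {f : MvPolynomial (Fin r × Fin b) F //
        (BlockSymmetric r b F f ∧ BlockDegLE r b (b * s) F f) ∧
        ∀ u ∈ U, VanishesOn r b F f u} * q ^ U.card =
      Nat.card {f : MvPolynomial (Fin r × Fin b) F //
        BlockSymmetric r b F f ∧ BlockDegLE r b (b * s) F f} := by
  classical
  obtain ⟨T, hT⟩ := hsimple
  set V : Finset (Fin b → F) := U.sup id with hVdef
  -- the linear functional
  set ℓ : ((Fin b → F)) →ₗ[F] F := (LinearMap.proj (⟨0, hb⟩ : Fin b)).comp T.toLinearMap with hℓdef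
  have hℓinj : Set.InjOn ℓ (V : Set (Fin b → F)) := hT
  have hVmem : ∀ u ∈ U, ∀ v ∈ u, v ∈ V := by
    intro u hu v hv
    exact Finset.mem_of_subset (Finset.le_sup (f := id) hu) hv
  -- choose an ordering of each r-set
  have hord : ∀ u : {u // u ∈ U}, ∃ g : Fin r → (Fin b → F),
      Function.Injective g ∧ Finset.image g Finset.univ = u.1 := by
    rintro ⟨u, hu⟩
    have hcard : u.card = r := hUr u hu
    let e : {x // x ∈ u} ≃ Fin r := u.equivFin.trans (finCongr hcard)
    refine ⟨fun i => (e.symm i).1, ?_, ?_⟩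
    · intro i i' h
      exact (Equiv.injective e.symm) (Subtype.ext h)
    · ext x
      simp only [Finset.mem_image, Finset.mem_univ, true_and]
      constructor
      · rintro ⟨i, rfl⟩; exact (e.symm i).2
      · intro hx; exact ⟨e ⟨x, hx⟩, by simp⟩
  choose g hginj hgim using hord
  -- the submodule of symmetric polynomials of bounded block degree
  set M : Submodule F (MvPolynomial (Fin r × Fin b) F) :=
    { carrier := {f | BlockSymmetric r b F f ∧ BlockDegLE r b (b * s) F f}
      add_mem' := by
        rintro f₁ f₂ ⟨hs₁, hd₁⟩ ⟨hs₂, hd₂⟩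
        refine ⟨fun σ => by rw [map_add, hs₁ σ, hs₂ σ], fun μ hμ i => ?_⟩
        rcases Finset.mem_union.mp (MvPolynomial.support_add hμ) with h | h
        · exact hd₁ μ h i
        · exact hd₂ μ h i
      zero_mem' := by
        refine ⟨fun σ => by rw [map_zero], fun μ hμ i => ?_⟩
        simp at hμ
      smul_mem' := by
        rintro c f ⟨hs₁, hd₁⟩
        refine ⟨fun σ => ?_, fun μ hμ i => ?_⟩
        · have : rename (fun p : Fin r × Fin b => (σ p.1, p.2)) (c • f)
              = c • rename (fun p : Fin r × Fin b => (σ p.1, p.2)) f := by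
            simp [smul_eq_C_mul]
          rw [this, hs₁ σ]
        · exact hd₁ μ (MvPolynomial.support_smul hμ) i } with hMdef
  have hMmem : ∀ f : MvPolynomial (Fin r × Fin b) F,
      f ∈ M ↔ BlockSymmetric r b F f ∧ BlockDegLE r b (b * s) F f := fun f => Iff.rfl
  -- the evaluation map
  set ε : M →ₗ[F] ({u // u ∈ U} → F) :=
    { toFun := fun f => fun u => eval (fun p : Fin r × Fin b => g u p.1 p.2) f.1
      map_add' := by intro f₁ f₂; funext u; simp
      map_smul' := by intro c f; funext u; simp } with hεdef
  -- surjectivity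
  have hsep : ∀ u₀ : {u // u ∈ U}, ∃ f : M, ε f u₀ ≠ 0 ∧ ∀ u : {u // u ∈ U}, u ≠ u₀ → ε f u = 0 := by
    intro u₀
    -- choose a witness point in u \ u₀ for each u ≠ u₀
    have hpt : ∀ u : {u // u ∈ U}, u ≠ u₀ → ∃ v, v ∈ u.1 ∧ v ∉ u₀.1 := by
      intro u hu
      by_contra hcon
      push_neg at hcon
      have hsub : u.1 ⊆ u₀.1 := fun v hv => hcon v hv
      have : u.1 = u₀.1 := Finset.eq_of_subset_of_card_le hsub
        (by rw [hUr u.1 u.2, hUr u₀.1 u₀.2])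
      exact hu (Subtype.ext this)
    set P : MvPolynomial (Fin r × Fin b) F :=
      ∏ u ∈ Finset.univ.erase u₀, Apoly ℓ r (ℓ (if h : u ≠ u₀ then (hpt u h).choose else 0)) with hPdef
    have hPsym : BlockSymmetric r b F P := by
      intro σ
      rw [hPdef, map_prod]
      exact Finset.prod_congr rfl fun u _ => Apoly_symm ℓ _ σ
    have hPdeg : BlockDegLE r b (b * s) F P := by
      intro μ hμ i
      have hA : ∀ (a : F), ∀ μ' ∈ (Apoly ℓ r a).support, bdeg b i μ' ≤ 1 := by
        intro a μ' hμ'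
        have := bdeg_prod_le (Finset.univ) (fun i' => factor ℓ r a i')
          (fun i' => if i' = i then 1 else 0) i
          (fun i' _ => bdeg_factor ℓ a i' i) μ' (by simpa [Apoly] using hμ')
        simpa using this
      have hbound := bdeg_prod_le (Finset.univ.erase u₀)
        (fun u => Apoly ℓ r (ℓ (if h : u ≠ u₀ then (hpt u h).choose else 0)))
        (fun _ => 1) i (fun u _ => hA _) μ (by rwa [← hPdef])
      simp only [Finset.sum_const, smul_eq_mul, mul_one] at hbound
      refine le_trans hbound (le_trans ?_ hUsize)
      calc (Finset.univ.erase u₀).card ≤ Finset.univ.card :=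
            Finset.card_le_card (Finset.erase_subset _ _)
        _ = U.card := by rw [Finset.card_univ, Fintype.card_coe]
      -- done
    have hεP : ∀ u : {u // u ∈ U}, ε ⟨P, hPsym, hPdeg⟩ u
        = ∏ u' ∈ Finset.univ.erase u₀, ∏ i : Fin r,
            (ℓ (if h : u' ≠ u₀ then (hpt u' h).choose else 0) - ℓ (g u i)) := by
      intro u
      show eval (fun p : Fin r × Fin b => g u p.1 p.2) P = _
      rw [hPdef, map_prod]
      exact Finset.prod_congr rfl fun u' _ => eval_Apoly ℓ _ (g u)
    refine ⟨⟨P, hPsym, hPdeg⟩, ?_, ?_⟩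
    · rw [hεP u₀]
      rw [Finset.prod_ne_zero_iff]
      intro u' hu'
      have hu'ne : u' ≠ u₀ := (Finset.mem_erase.mp hu').1
      rw [dif_pos hu'ne]
      rw [Finset.prod_ne_zero_iff]
      intro i _
      rw [sub_ne_zero]
      obtain ⟨hv1, hv2⟩ := (hpt u' hu'ne).choose_spec
      have hgmem : g u₀ i ∈ u₀.1 := by
        rw [← hgim u₀]
        exact Finset.mem_image_of_mem _ (Finset.mem_univ i)
      intro heq
      have := hℓinj (hVmem u'.1 u'.2 _ hv1) (hVmem u₀.1 u₀.2 _ hgmem) heq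
      rw [this] at hv2
      exact hv2 hgmem
    · intro u hune
      rw [hεP u]
      apply Finset.prod_eq_zero (Finset.mem_erase.mpr ⟨hune, Finset.mem_univ u⟩)
      obtain ⟨hv1, hv2⟩ := (hpt u hune).choose_spec
      have : (hpt u hune).choose ∈ Finset.image (g u) Finset.univ := by rw [hgim u]; exact hv1
      obtain ⟨i, -, hi⟩ := Finset.mem_image.mp this
      apply Finset.prod_eq_zero (Finset.mem_univ i)
      rw [dif_pos hune, hi, sub_self]
  -- surjectivity of ε
  have hsurj : Function.Surjective ε := by
    intro y
    choose fs hfs0 hfsz using hsep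
    refine ⟨∑ u₀ : {u // u ∈ U}, (y u₀ * (ε (fs u₀) u₀)⁻¹) • fs u₀, ?_⟩
    funext u
    have h1 : ε (∑ u₀ : {u // u ∈ U}, (y u₀ * (ε (fs u₀) u₀)⁻¹) • fs u₀) u
        = ∑ u₀ : {u // u ∈ U}, (y u₀ * (ε (fs u₀) u₀)⁻¹) * ε (fs u₀) u := by
      rw [map_sum, Finset.sum_apply]
      exact Finset.sum_congr rfl fun u₀ _ => by rw [map_smul]; rfl
    rw [h1, Finset.sum_eq_single u]
    · rw [mul_assoc, inv_mul_cancel₀ (hfs0 u), mul_one]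
    · intro u₀ _ hne
      rw [hfsz u₀ u (fun h => hne h.symm), mul_zero]
    · intro h
      exact absurd (Finset.mem_univ u) h
  -- the kernel is the set of vanishing polynomials
  have hker : ∀ f : M, f ∈ LinearMap.ker ε ↔ ∀ u ∈ U, VanishesOn r b F f.1 u := by
    intro f
    rw [LinearMap.mem_ker]
    constructor
    · intro hf u hu g' hg'inj hg'im
      have h0 : eval (fun p : Fin r × Fin b => g ⟨u, hu⟩ p.1 p.2) f.1 = 0 := congrFun hf ⟨u, hu⟩
      have hex : ∀ i : Fin r, ∃ i', g' i' = g ⟨u, hu⟩ i := by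
        intro i
        have hmem := Finset.mem_image_of_mem (g ⟨u, hu⟩) (Finset.mem_univ i)
        rw [hgim ⟨u, hu⟩] at hmem
        have hmem' : g ⟨u, hu⟩ i ∈ Finset.image g' Finset.univ := by
          rw [hg'im]; exact hmem
        simpa using Finset.mem_image.mp hmem'
      choose σf hσf using hex
      have hσinj : Function.Injective σf := by
        intro i i' h
        apply hginj ⟨u, hu⟩
        rw [← hσf i, ← hσf i', h]
      let σ : Equiv.Perm (Fin r) := Equiv.ofBijective σf (Finite.injective_iff_bijective.mp hσinj)
      have hsym : rename (fun p : Fin r × Fin b => (σ p.1, p.2)) f.1 = f.1 := f.2.1 σ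
      calc eval (fun p : Fin r × Fin b => g' p.1 p.2) f.1
          = eval (fun p : Fin r × Fin b => g' p.1 p.2)
              (rename (fun p : Fin r × Fin b => (σ p.1, p.2)) f.1) := by rw [hsym]
        _ = eval ((fun p : Fin r × Fin b => g' p.1 p.2) ∘ (fun p => (σ p.1, p.2))) f.1 := by
            rw [eval_rename]
        _ = eval (fun p : Fin r × Fin b => g ⟨u, hu⟩ p.1 p.2) f.1 := by
            have hfun : ((fun p : Fin r × Fin b => g' p.1 p.2) ∘
                (fun p : Fin r × Fin b => (σ p.1, p.2)))
                = fun p : Fin r × Fin b => g ⟨u, hu⟩ p.1 p.2 := by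
              funext p
              exact congrFun (hσf p.1) p.2
            rw [hfun]
        _ = 0 := h0
    · intro h
      funext u
      exact h u.1 u.2 (g u) (hginj u) (hgim u)
  -- equivalences
  let E : {f : MvPolynomial (Fin r × Fin b) F //
      (BlockSymmetric r b F f ∧ BlockDegLE r b (b * s) F f) ∧
      ∀ u ∈ U, VanishesOn r b F f u} ≃ LinearMap.ker ε :=
    { toFun := fun f => ⟨⟨f.1, f.2.1⟩, (hker ⟨f.1, f.2.1⟩).mpr f.2.2⟩
      invFun := fun k => ⟨k.1.1, ⟨k.1.2, (hker k.1).mp k.2⟩⟩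
      left_inv := fun f => rfl
      right_inv := fun k => rfl }
  calc Nat.card {f : MvPolynomial (Fin r × Fin b) F //
        (BlockSymmetric r b F f ∧ BlockDegLE r b (b * s) F f) ∧
        ∀ u ∈ U, VanishesOn r b F f u} * q ^ U.card
      = Nat.card (LinearMap.ker ε) * Nat.card ({u // u ∈ U} → F) := by
        rw [Nat.card_congr E]
        congr 1
        rw [Nat.card_eq_fintype_card, Fintype.card_fun, hq, Fintype.card_coe]
    _ = Nat.card (LinearMap.ker ε) * Nat.card (M ⧸ LinearMap.ker ε) := by
        congr 1
        exact (Nat.card_congr (LinearMap.quotKerEquivOfSurjective ε hsurj).toEquiv).symm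
    _ = Nat.card M := (Submodule.card_eq_card_quotient_mul_card _).symm
    _ = Nat.card {f : MvPolynomial (Fin r × Fin b) F //
        BlockSymmetric r b F f ∧ BlockDegLE r b (b * s) F f} :=
        Nat.card_congr (Equiv.subtypeEquivRight fun f => hMmem f)
end
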